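/- arXiv:1910.08258 — 5 statements merged into one kernel-verified Lean document; each statement's English description precedes it below -/
import Mathlib

section
/- Let X be an mn×mn Hermitian positive semidefinite complex matrix, viewed as an n×n array of m×m blocks [X]_{jk}. Suppose u ∈ ℂ^{mn} (viewed as n blocks of size m) satisfies X u = 0, and let Ω(u) = { j : [u]_j ≠ 0 }. If Ω(u) = Ω₁ ∪ Ω₂ where Ω₁, Ω₂ are nonempty, disjoint, and for all j ∈ Ω₁, k ∈ Ω₂ the block [X]_{jk} = 0, then the vector ũ obtained from u by zeroing out the blocks indexed by Ω₂ is nonzero and also satisfies X ũ = 0. -/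
open Matrix
open scoped ComplexOrder Classical

/-- zeroing out the blocks of a kernel vector indexed by a
component `Ω₂` that is block-decoupled from `Ω₁` yields another nonzero
kernel vector. -/
theorem stmt0 (m n : ℕ)
    (X : Matrix (Fin n × Fin m) (Fin n × Fin m) ℂ)
    (hX : X.PosSemidef)
    (u : Fin n × Fin m → ℂ)
    (hXu : X.mulVec u = 0)
    (Ω₁ Ω₂ : Set (Fin n))
    (hΩ : {j : Fin n | ∃ φ, u (j, φ) ≠ 0} = Ω₁ ∪ Ω₂)
    (h1 : Ω₁.Nonempty) (h2 : Ω₂.Nonempty)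
    (hdisj : Disjoint Ω₁ Ω₂)
    (hzero : ∀ j ∈ Ω₁, ∀ k ∈ Ω₂, ∀ φ ψ : Fin m, X (j, φ) (k, ψ) = 0) :
    (fun p : Fin n × Fin m => if p.1 ∈ Ω₂ then 0 else u p) ≠ 0 ∧
    X.mulVec (fun p : Fin n × Fin m => if p.1 ∈ Ω₂ then 0 else u p) = 0 := by
  set ut : Fin n × Fin m → ℂ := fun p => if p.1 ∈ Ω₂ then 0 else u p with hut
  have hsupp : ∀ p : Fin n × Fin m, ut p ≠ 0 → p.1 ∈ Ω₁ := by
    intro p hp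
    by_cases h2' : p.1 ∈ Ω₂
    · simp [hut, h2'] at hp
    · simp only [hut, h2', if_false] at hp
      have hmem : p.1 ∈ Ω₁ ∪ Ω₂ := by
        rw [← hΩ]
        exact ⟨p.2, by simpa using hp⟩
      rcases hmem with h | h
      · exact h
      · exact absurd h h2'
  have hrow : ∀ p : Fin n × Fin m, p.1 ∈ Ω₁ → (X *ᵥ ut) p = 0 := by
    intro p hp
    have h0 : (X *ᵥ u) p = 0 := congrFun hXu p
    calc (X *ᵥ ut) p = ∑ q, X p q * ut q := rfl
      _ = ∑ q, X p q * u q := by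
          refine Finset.sum_congr rfl fun q _ => ?_
          by_cases hq : q.1 ∈ Ω₂
          · rw [(rfl : X p q = X (p.1, p.2) (q.1, q.2)),
              hzero p.1 hp q.1 hq p.2 q.2, zero_mul, zero_mul]
          · simp [hut, hq]
      _ = 0 := h0
  have hq : star ut ⬝ᵥ X *ᵥ ut = 0 := by
    calc star ut ⬝ᵥ X *ᵥ ut = ∑ p, star (ut p) * (X *ᵥ ut) p := rfl
      _ = 0 := Finset.sum_eq_zero fun p _ => by
          by_cases hp : ut p = 0
          · simp [hp]
          · rw [hrow p (hsupp p hp), mul_zero]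
  refine ⟨?_, (hX.dotProduct_mulVec_zero_iff ut).mp hq⟩
  obtain ⟨j, hj⟩ := h1
  have hjΩ : j ∈ {j : Fin n | ∃ φ, u (j, φ) ≠ 0} := by
    rw [hΩ]; exact Or.inl hj
  obtain ⟨φ, hφ⟩ := hjΩ
  have hj2 : j ∉ Ω₂ := Set.disjoint_left.mp hdisj hj
  intro h
  have := congrFun h (j, φ)
  simp [hut, hj2] at this
  exact hφ this
end

section
/- Let G = (V, E) be a finite simple graph on n vertices and X an mn×mn Hermitian positive semidefinite matrix (viewed in m×m blocks) that is G-invertible, i.e., [X]_{ab} is invertible for every edge (a,b) ∈ E and [X]_{ab} = 0 for every non-adjacent pair a ≠ b. If y ∈ ℂ^{mn} is a nonzero vector with X y = 0 whose block support Ω(y) = { j : [y]_j ≠ 0 } has minimal cardinality among all nonzero vectors in the kernel of X, then Ω(y) induces a connected subgraph of G. -/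
open Matrix
open scoped ComplexOrder Classical

/-- a minimal-block-support nonzero kernel vector of a
`G`-invertible PSD matrix has connected block support. -/
theorem stmt1 (m n : ℕ) (G : SimpleGraph (Fin n))
    (X : Matrix (Fin n × Fin m) (Fin n × Fin m) ℂ)
    (hX : X.PosSemidef)
    (hedge : ∀ a b : Fin n, G.Adj a b →
      IsUnit (Matrix.of fun φ ψ : Fin m => X (a, φ) (b, ψ)))
    (hnonedge : ∀ a b : Fin n, a ≠ b → ¬ G.Adj a b →
      ∀ φ ψ : Fin m, X (a, φ) (b, ψ) = 0)
    (y : Fin n × Fin m → ℂ) (hy : y ≠ 0) (hXy : X.mulVec y = 0)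
    (hmin : ∀ z : Fin n × Fin m → ℂ, z ≠ 0 → X.mulVec z = 0 →
      {j : Fin n | ∃ φ, y (j, φ) ≠ 0}.ncard ≤ {j : Fin n | ∃ φ, z (j, φ) ≠ 0}.ncard) :
    (G.induce {j : Fin n | ∃ φ, y (j, φ) ≠ 0}).Connected := by
  set Ω : Set (Fin n) := {j : Fin n | ∃ φ, y (j, φ) ≠ 0} with hΩ
  -- Ω is nonempty
  have hyex : ∃ p, y p ≠ 0 := by
    by_contra h
    push_neg at h
    exact hy (funext h)
  obtain ⟨p0, hp0⟩ := hyex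
  have hp0Ω : p0.1 ∈ Ω := ⟨p0.2, by simpa using hp0⟩
  -- Key step: any nonempty subset of Ω closed under G-adjacency within Ω is all of Ω
  have key : ∀ A : Set (Fin n), A ⊆ Ω → A.Nonempty →
      (∀ a ∈ A, ∀ b ∈ Ω, G.Adj a b → b ∈ A) → Ω ⊆ A := by
    intro A hAΩ ⟨a0, ha0⟩ hcl
    -- the truncated vector
    set z : Fin n × Fin m → ℂ := fun p => if p.1 ∈ A then y p else 0 with hz
    have hz0 : z ≠ 0 := by
      obtain ⟨φ, hφ⟩ := hAΩ ha0
      intro h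
      have : z (a0, φ) = 0 := by rw [h]; rfl
      rw [hz] at this
      simp only [ha0, if_pos] at this
      exact hφ this
    -- star z ⬝ᵥ X *ᵥ (y - z) = 0
    have hcross : star z ⬝ᵥ X *ᵥ (y - z) = 0 := by
      rw [dotProduct, Finset.sum_eq_zero]
      intro i _
      rcases eq_or_ne (z i) 0 with h | h
      · simp [h]
      have hiA : i.1 ∈ A := by
        by_contra hiA
        exact h (by simp [hz, hiA])
      have hiy : z i = y i := by simp [hz, hiA]
      rw [mulVec, dotProduct, Finset.mul_sum, Finset.sum_eq_zero]
      intro j _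
      rcases eq_or_ne ((y - z) j) 0 with h' | h'
      · simp [h']
      have hjA : j.1 ∉ A := by
        intro hjA
        exact h' (by simp [hz, hjA])
      have hjΩ : j.1 ∈ Ω := by
        refine ⟨j.2, ?_⟩
        intro hyj
        exact h' (by simp [hz, hjA, Pi.sub_apply, hyj])
      have hne : i.1 ≠ j.1 := fun hh => hjA (hh ▸ hiA)
      have hadj : ¬ G.Adj i.1 j.1 := fun hadj => hjA (hcl i.1 hiA j.1 hjΩ hadj)
      have : X i j = 0 := by
        have := hnonedge i.1 j.1 hne hadj i.2 j.2
        simpa using this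
      simp [this]
    -- hence X z = 0
    have hXz : X.mulVec z = 0 := by
      rw [← hX.dotProduct_mulVec_zero_iff]
      have : X *ᵥ z = X *ᵥ y - X *ᵥ (y - z) := by
        rw [mulVec_sub]; ring_nf
      rw [this, hXy]
      simp only [zero_sub, dotProduct_neg, hcross, neg_zero]
    -- support of z is contained in A (hence in Ω)
    have hsupp : {j : Fin n | ∃ φ, z (j, φ) ≠ 0} ⊆ Ω := by
      intro j ⟨φ, hφ⟩
      refine ⟨φ, ?_⟩
      intro hyj
      exact hφ (by simp [hz, hyj])
    have hsuppA : {j : Fin n | ∃ φ, z (j, φ) ≠ 0} ⊆ A := by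
      intro j ⟨φ, hφ⟩
      by_contra hjA
      exact hφ (by simp [hz, hjA])
    have hle := hmin z hz0 hXz
    have heq : {j : Fin n | ∃ φ, z (j, φ) ≠ 0} = Ω :=
      Set.eq_of_subset_of_ncard_le hsupp hle (Set.toFinite _)
    intro x hx
    exact hsuppA (heq ▸ hx)
  -- Now prove connectivity
  haveI : Nonempty ↥Ω := ⟨⟨p0.1, hp0Ω⟩⟩
  refine ⟨?_⟩
  · intro a b
    obtain ⟨a, ha⟩ := a
    obtain ⟨b, hb⟩ := b
    set A : Set (Fin n) :=
      {j : Fin n | ∃ h : j ∈ Ω, (G.induce Ω).Reachable ⟨a, ha⟩ ⟨j, h⟩} with hA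
    have hAΩ : A ⊆ Ω := fun j ⟨h, _⟩ => h
    have haA : a ∈ A := ⟨ha, SimpleGraph.Reachable.refl _⟩
    have hcl : ∀ x ∈ A, ∀ w ∈ Ω, G.Adj x w → w ∈ A := by
      intro x ⟨hx, hreach⟩ w hw hadj
      refine ⟨hw, hreach.trans ?_⟩
      exact SimpleGraph.Adj.reachable (by exact hadj)
    have hbA : b ∈ A := key A hAΩ ⟨a, haA⟩ hcl hb
    obtain ⟨h, hreach⟩ := hbA
    exact hreach
end

section
/- Let G = (V, E) be a tree on n ≥ 2 vertices and X an mn×mn Hermitian PSD matrix that is G-invertible. Then the kernel of X contains no nonzero vector u with block support Ω(u) a proper nonempty subset of V. Equivalently, every nonzero u ∈ ker(X) satisfies [u]_j ≠ 0 for all vertices j. -/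
open Matrix SimpleGraph
open scoped ComplexOrder Classical

/-- for a tree `G` on `n ≥ 2` vertices and a `G`-invertible PSD
matrix `X`, every nonzero kernel vector has full block support. -/
theorem stmt2 (m n : ℕ) (hn : 2 ≤ n) (G : SimpleGraph (Fin n))
    (hG : G.IsTree)
    (X : Matrix (Fin n × Fin m) (Fin n × Fin m) ℂ)
    (hX : X.PosSemidef)
    (hedge : ∀ a b : Fin n, G.Adj a b →
      IsUnit (Matrix.of fun φ ψ : Fin m => X (a, φ) (b, ψ)))
    (hnonedge : ∀ a b : Fin n, a ≠ b → ¬ G.Adj a b →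
      ∀ φ ψ : Fin m, X (a, φ) (b, ψ) = 0)
    (u : Fin n × Fin m → ℂ) (hu : u ≠ 0) (hXu : X.mulVec u = 0) :
    ∀ j : Fin n, ∃ φ : Fin m, u (j, φ) ≠ 0 := by
  by_contra hcon
  push_neg at hcon
  obtain ⟨j, hj⟩ := hcon
  -- block support of u
  set S : Set (Fin n) := {a | ∃ φ, u (a, φ) ≠ 0} with hSdef
  obtain ⟨i0, hi0⟩ := Function.ne_iff.mp hu
  have hb0S : i0.1 ∈ S := ⟨i0.2, by simpa using hi0⟩
  have hjS : j ∉ S := by rintro ⟨φ, hφ⟩; exact hφ (hj φ)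
  -- connected component of i0.1 inside S, via walks with support in S
  set C : Set (Fin n) := {a | ∃ w : G.Walk i0.1 a, ∀ x ∈ w.support, x ∈ S} with hCdef
  have hCS : C ⊆ S := by
    rintro a ⟨w, hw⟩
    exact hw a w.end_mem_support
  have hb0C : i0.1 ∈ C := ⟨Walk.nil, by simpa using hb0S⟩
  have hjC : j ∉ C := fun h => hjS (hCS h)
  -- closure: a neighbor (in S) of a vertex of C lies in C
  have hclose : ∀ a ∈ C, ∀ b ∈ S, G.Adj a b → b ∈ C := by
    rintro a ⟨w, hw⟩ b hbS hab
    refine ⟨w.concat hab, ?_⟩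
    intro x hx
    rw [Walk.support_concat, List.mem_append] at hx
    rcases hx with hx | hx
    · exact hw x hx
    · rwa [List.mem_singleton.mp hx]
  -- walks within C between members of C
  have hwalk : ∀ a ∈ C, ∀ b ∈ C, ∃ w : G.Walk a b, ∀ x ∈ w.support, x ∈ S := by
    rintro a ⟨wa, hwa⟩ b ⟨wb, hwb⟩
    refine ⟨wa.reverse.append wb, ?_⟩
    intro x hx
    rw [Walk.mem_support_append_iff, Walk.support_reverse, List.mem_reverse] at hx
    rcases hx with hx | hx
    · exact hwa x hx
    · exact hwb x hx
  -- the truncated vector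
  set v : Fin n × Fin m → ℂ := fun p => if p.1 ∈ C then u p else 0 with hvdef
  have hvC : ∀ p : Fin n × Fin m, v p ≠ 0 → p.1 ∈ C := by
    intro p hp
    by_contra h
    exact hp (by simp [hvdef, h])
  have hvu : ∀ p : Fin n × Fin m, p.1 ∈ C → v p = u p := by
    intro p hp; simp [hvdef, hp]
  -- X *ᵥ v = 0
  have hXv : X *ᵥ v = 0 := by
    rw [← hX.dotProduct_mulVec_zero_iff]
    have h1 : star v ⬝ᵥ X *ᵥ u = 0 := by rw [hXu, dotProduct_zero]
    have h2 : star v ⬝ᵥ X *ᵥ (u - v) = 0 := by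
      rw [dotProduct, Finset.sum_eq_zero]
      intro i _
      by_cases hvi : v i = 0
      · simp [hvi]
      · have hiC : i.1 ∈ C := hvC i hvi
        have : (X *ᵥ (u - v)) i = 0 := by
          rw [mulVec, dotProduct, Finset.sum_eq_zero]
          intro q _
          by_cases hqC : q.1 ∈ C
          · simp [hvu q hqC]
          · by_cases hq : u q = 0
            · have : v q = 0 := by simp [hvdef, hqC]
              simp [hq, this]
            · have hqS : q.1 ∈ S := ⟨q.2, hq⟩
              have hne : i.1 ≠ q.1 := fun h => hqC (h ▸ hiC)
              have hnadj : ¬ G.Adj i.1 q.1 := fun h => hqC (hclose _ hiC _ hqS h)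
              rw [hnonedge i.1 q.1 hne hnadj i.2 q.2]
              ring
        simp [this]
    have h3 : star v ⬝ᵥ X *ᵥ v = star v ⬝ᵥ X *ᵥ u - star v ⬝ᵥ X *ᵥ (u - v) := by
      rw [mulVec_sub, dotProduct_sub]
      ring
    rw [h3, h1, h2, sub_zero]
  -- boundary dart
  obtain ⟨p⟩ := hG.isConnected.preconnected i0.1 j
  obtain ⟨d, _, hdfst, hdsnd⟩ := p.exists_boundary_dart C hb0C hjC
  set b := d.fst
  set a := d.snd
  have hadj : G.Adj b a := d.adj
  have haS : a ∉ S := fun h => hdsnd (hclose _ hdfst _ h hadj)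
  -- uniqueness of neighbor of a in C
  have huniq : ∀ c ∈ C, G.Adj a c → c = b := by
    intro c hc hac
    by_contra hcb
    obtain ⟨w, hw⟩ := hwalk c hc b hdfst
    have haw : a ∉ w.toPath.val.support := fun h =>
      haS (hw a (Walk.support_toPath_subset w h))
    set p1 : G.Path a b := SimpleGraph.Path.singleton hadj.symm with hp1
    set p2 : G.Path a b :=
      ⟨Walk.cons hac w.toPath.val, by
        rw [Walk.cons_isPath_iff]; exact ⟨w.toPath.prop, haw⟩⟩ with hp2
    have := SimpleGraph.isAcyclic_iff_path_unique.mp hG.IsAcyclic p1 p2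
    have hcmem : c ∈ p2.val.support := by
      rw [hp2]
      simp [Walk.support_cons]
    rw [← this] at hcmem
    rw [hp1] at hcmem
    simp only [SimpleGraph.Path.singleton, Walk.support_cons, Walk.support_nil,
      List.mem_cons, List.mem_singleton] at hcmem
    rcases hcmem with h | h | h
    · exact haS (h ▸ hCS hc)
    · exact hcb h
    · simp at h
  -- block equation at row a
  set B : Matrix (Fin m) (Fin m) ℂ := Matrix.of fun φ ψ => X (a, φ) (b, ψ) with hBdef
  have hB : IsUnit B := hedge a b hadj.symm
  have hBu : B *ᵥ (fun ψ => u (b, ψ)) = 0 := by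
    funext φ
    have h0 : (X *ᵥ v) (a, φ) = 0 := by rw [hXv]; rfl
    rw [mulVec, dotProduct, Fintype.sum_prod_type] at h0
    have hrow : ∀ c : Fin n, c ≠ b → ∑ ψ, X (a, φ) (c, ψ) * v (c, ψ) = 0 := by
      intro c hcb
      apply Finset.sum_eq_zero
      intro ψ _
      by_cases hvq : v (c, ψ) = 0
      · simp [hvq]
      · have hcC : c ∈ C := hvC (c, ψ) hvq
        have hne : a ≠ c := fun h => hdsnd (h ▸ hcC)
        have hnadj : ¬ G.Adj a c := fun h => hcb (huniq c hcC h)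
        rw [hnonedge a c hne hnadj φ ψ]
        ring
    rw [Finset.sum_eq_single b (fun c _ hcb => hrow c hcb) (by simp)] at h0
    have : ∑ ψ, X (a, φ) (b, ψ) * v (b, ψ) = ∑ ψ, X (a, φ) (b, ψ) * u (b, ψ) := by
      apply Finset.sum_congr rfl
      intro ψ _
      rw [hvu (b, ψ) hdfst]
    rw [this] at h0
    simpa [mulVec, dotProduct, hBdef] using h0
  have hinj : Function.Injective B.mulVec := mulVec_injective_iff_isUnit.mpr hB
  have hzero : (fun ψ => u (b, ψ)) = 0 := by
    apply hinj
    rw [hBu, mulVec_zero]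
  obtain ⟨ψ, hψ⟩ := hCS hdfst
  exact hψ (congrFun hzero ψ)
end

section
/- Let G be a tree, X a G-invertible (block-structured Hermitian PSD) mn×mn matrix, and u ∈ ℂ^{mn} a nonzero vector with X u = 0. If k ∈ Ω(u) is a vertex with a neighbor j ∉ Ω(u), all other neighbors of j are outside Ω(u), and j itself is not in Ω(u), then [X u]_j = [X]_{jk}[u]_k ≠ 0, a contradiction; hence no such configuration exists in ker(X). -/
open Matrix
open scoped ComplexOrder Classical

/-- for a tree `G` and a `G`-invertible PSD matrix `X`, no
nonzero kernel vector `u` admits a vertex `j ∉ Ω(u)` whose unique neighbor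
in `Ω(u)` is some `k ∈ Ω(u)` (all other neighbors of `j` lying outside
`Ω(u)`): the block identity `[Xu]_j = [X]_{jk} [u]_k ≠ 0` contradicts
`X u = 0`. -/
theorem stmt3 (m n : ℕ) (G : SimpleGraph (Fin n))
    (hG : G.IsTree)
    (X : Matrix (Fin n × Fin m) (Fin n × Fin m) ℂ)
    (hX : X.PosSemidef)
    (hedge : ∀ a b : Fin n, G.Adj a b →
      IsUnit (Matrix.of fun φ ψ : Fin m => X (a, φ) (b, ψ)))
    (hnonedge : ∀ a b : Fin n, a ≠ b → ¬ G.Adj a b →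
      ∀ φ ψ : Fin m, X (a, φ) (b, ψ) = 0)
    (u : Fin n × Fin m → ℂ) (hu : u ≠ 0) (hXu : X.mulVec u = 0) :
    ¬ ∃ (k j : Fin n),
        (∃ φ, u (k, φ) ≠ 0) ∧            -- k ∈ Ω(u)
        G.Adj j k ∧
        (∀ φ, u (j, φ) = 0) ∧            -- j ∉ Ω(u)
        (∀ l : Fin n, G.Adj j l → l ≠ k → ∀ φ, u (l, φ) = 0) := by
  rintro ⟨k, j, ⟨φ0, hk⟩, hadj, hj0, hothers⟩
  set B : Matrix (Fin m) (Fin m) ℂ := Matrix.of fun φ ψ : Fin m => X (j, φ) (k, ψ) with hBdef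
  have hB : IsUnit B := hedge j k hadj
  have hv : B.mulVec (fun ψ => u (k, ψ)) = 0 := by
    funext φ
    have h := congrFun hXu (j, φ)
    simp only [Matrix.mulVec, dotProduct, Pi.zero_apply] at h
    rw [Fintype.sum_prod_type, Finset.sum_eq_single k] at h
    · simpa [Matrix.mulVec, dotProduct, hBdef] using h
    · intro l _ hlk
      apply Finset.sum_eq_zero
      intro ψ _
      by_cases hlj : l = j
      · subst hlj; simp [hj0]
      · by_cases hadjl : G.Adj j l
        · simp [hothers l hadjl hlk]
        · simp [hnonedge j l (fun h => hlj h.symm) hadjl]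
    · intro h'; exact absurd (Finset.mem_univ k) h'
  have hdet := (Matrix.isUnit_iff_isUnit_det B).mp hB
  have hv0 : (fun ψ => u (k, ψ)) = 0 := by
    have h2 := congrArg (B⁻¹.mulVec) hv
    rwa [Matrix.mulVec_mulVec, Matrix.nonsing_inv_mul B hdet, Matrix.one_mulVec,
      Matrix.mulVec_zero] at h2
  exact hk (congrFun hv0 φ0)
end

section
/- Let W be an mn×mn Hermitian PSD matrix of rank at least 2 whose top-left m×m block satisfies [W]_{00} = v v^H for some nonzero v ∈ ℂ^m. Write W = Σ_{l=1}^{L} ρ_l u_l u_l^H with ρ_l > 0 and u_l orthonormal, L ≥ 2. Then there exists a nonzero vector ũ in the span of {u_1, u_2} with [ũ]_0 = 0 (i.e., the first m entries of ũ vanish). -/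
open Matrix
open scoped ComplexOrder Classical

/-- if `W` is Hermitian PSD of rank ≥ 2 whose top-left `m × m`
block is `v vᴴ` with `v ≠ 0`, and `W = Σ ρ_l u_l u_lᴴ` with `ρ_l > 0` and the
`u_l` orthonormal, then some nonzero vector in the span of `u_1, u_2` has
vanishing first block. -/
theorem stmt4 (m n : ℕ) (hn : 0 < n)
    (W : Matrix (Fin n × Fin m) (Fin n × Fin m) ℂ)
    (hW : W.PosSemidef)
    (hrank : 2 ≤ W.rank)
    (v : Fin m → ℂ) (hv : v ≠ 0)
    (hblock : ∀ φ ψ : Fin m, W (⟨0, hn⟩, φ) (⟨0, hn⟩, ψ) = v φ * star (v ψ))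
    (L : ℕ) (hL : 2 ≤ L)
    (ρ : Fin L → ℝ) (hρ : ∀ l, 0 < ρ l)
    (u : Fin L → (Fin n × Fin m → ℂ))
    (horth : ∀ l l' : Fin L,
      ∑ p : Fin n × Fin m, star (u l p) * u l' p = if l = l' then 1 else 0)
    (hdecomp : ∀ p q : Fin n × Fin m,
      W p q = ∑ l : Fin L, (ρ l : ℂ) * u l p * star (u l q)) :
    ∃ utilde : Fin n × Fin m → ℂ, utilde ≠ 0 ∧
      (∃ c d : ℂ, utilde = c • u ⟨0, by omega⟩ + d • u ⟨1, by omega⟩) ∧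
      (∀ φ : Fin m, utilde (⟨0, hn⟩, φ) = 0) := by
  have z0 : Fin n := ⟨0, hn⟩
  -- block identity in terms of the u's
  have hkey : ∀ φ ψ : Fin m,
      ∑ l : Fin L, (ρ l : ℂ) * u l (⟨0, hn⟩, φ) * star (u l (⟨0, hn⟩, ψ))
        = v φ * star (v ψ) := by
    intro φ ψ; rw [← hdecomp, hblock]
  -- key: any vector orthogonal to v is orthogonal to each first block
  have key : ∀ w : Fin m → ℂ, (∑ ψ, star (v ψ) * w ψ) = 0 →
      ∀ l, (∑ φ, star (w φ) * u l (⟨0, hn⟩, φ)) = 0 := by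
    intro w hw l
    set z : Fin L → ℂ := fun l => ∑ φ, star (w φ) * u l (⟨0, hn⟩, φ) with hz
    have hsum : ∑ l, (ρ l : ℂ) * (z l * star (z l)) = 0 := by
      have expand : ∀ l : Fin L, (ρ l : ℂ) * (z l * star (z l)) =
          ∑ φ, ∑ ψ, star (w φ) * w ψ *
            ((ρ l : ℂ) * u l (⟨0, hn⟩, φ) * star (u l (⟨0, hn⟩, ψ))) := by
        intro l
        have hstar : star (z l) = ∑ ψ, w ψ * star (u l (⟨0, hn⟩, ψ)) := by
          simp [hz, star_sum]
        rw [hz, hstar, Finset.sum_mul_sum, Finset.mul_sum]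
        refine Finset.sum_congr rfl fun φ _ => ?_
        rw [Finset.mul_sum]
        refine Finset.sum_congr rfl fun ψ _ => ?_
        ring
      calc ∑ l, (ρ l : ℂ) * (z l * star (z l))
          = ∑ l, ∑ φ, ∑ ψ, star (w φ) * w ψ *
              ((ρ l : ℂ) * u l (⟨0, hn⟩, φ) * star (u l (⟨0, hn⟩, ψ))) :=
            Finset.sum_congr rfl fun l _ => expand l
        _ = ∑ φ, ∑ ψ, star (w φ) * w ψ *
              (∑ l, (ρ l : ℂ) * u l (⟨0, hn⟩, φ) * star (u l (⟨0, hn⟩, ψ))) := by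
            rw [Finset.sum_comm]
            refine Finset.sum_congr rfl fun φ _ => ?_
            rw [Finset.sum_comm]
            refine Finset.sum_congr rfl fun ψ _ => ?_
            rw [Finset.mul_sum]
        _ = ∑ φ, ∑ ψ, star (w φ) * w ψ * (v φ * star (v ψ)) := by
            refine Finset.sum_congr rfl fun φ _ => Finset.sum_congr rfl fun ψ _ => ?_
            rw [hkey]
        _ = (∑ φ, star (w φ) * v φ) * (∑ ψ, star (v ψ) * w ψ) := by
            rw [Finset.sum_mul_sum]
            refine Finset.sum_congr rfl fun φ _ => Finset.sum_congr rfl fun ψ _ => ?_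
            ring
        _ = 0 := by rw [hw, mul_zero]
    -- turn into a real sum of nonnegatives
    have hreal : ∑ l, ρ l * Complex.normSq (z l) = 0 := by
      have : ((∑ l, ρ l * Complex.normSq (z l) : ℝ) : ℂ) = 0 := by
        push_cast
        rw [← hsum]
        refine Finset.sum_congr rfl fun l _ => ?_
        rw [Complex.star_def, Complex.mul_conj]
      exact_mod_cast this
    have hzero : ∀ l ∈ Finset.univ, ρ l * Complex.normSq (z l) = 0 := by
      rw [← Finset.sum_eq_zero_iff_of_nonneg]
      · exact hreal
      · intro l _
        exact mul_nonneg (hρ l).le (Complex.normSq_nonneg _)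
    have := hzero l (Finset.mem_univ l)
    have hnz : Complex.normSq (z l) = 0 := by
      rcases mul_eq_zero.mp this with h | h
      · exact absurd h (hρ l).ne'
      · exact h
    simpa [hz] using Complex.normSq_eq_zero.mp hnz
  -- each first block is a multiple of v
  have hspan : ∀ l, ∃ c : ℂ, ∀ φ, u l (⟨0, hn⟩, φ) = c * v φ := by
    intro l
    set a : Fin m → ℂ := fun φ => u l (⟨0, hn⟩, φ) with ha
    set nv : ℂ := ∑ ψ, star (v ψ) * v ψ with hnvdef
    have hnv_cast : nv = ((∑ ψ, Complex.normSq (v ψ) : ℝ) : ℂ) := by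
      rw [hnvdef]; push_cast
      exact Finset.sum_congr rfl fun ψ _ => by
        rw [Complex.star_def, mul_comm, Complex.mul_conj]
    have hnv0 : nv ≠ 0 := by
      rw [hnv_cast]
      norm_cast
      intro h
      apply hv
      funext ψ
      have := (Finset.sum_eq_zero_iff_of_nonneg
        (fun i _ => Complex.normSq_nonneg (v i))).mp h ψ (Finset.mem_univ ψ)
      exact Complex.normSq_eq_zero.mp this
    set c : ℂ := (∑ ψ, star (v ψ) * a ψ) / nv with hc
    set w : Fin m → ℂ := fun φ => a φ - c * v φ with hwdef
    have hw : ∑ ψ, star (v ψ) * w ψ = 0 := by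
      have h1 : ∑ ψ, star (v ψ) * w ψ
          = (∑ ψ, star (v ψ) * a ψ) - c * nv := by
        simp only [hwdef, mul_sub, Finset.sum_sub_distrib]
        congr 1
        rw [hnvdef, Finset.mul_sum]
        exact Finset.sum_congr rfl fun ψ _ => by ring
      rw [h1, hc, div_mul_cancel₀ _ hnv0, sub_self]
    have h1 : ∑ φ, star (w φ) * a φ = 0 := key w hw l
    have h2 : ∑ φ, star (w φ) * v φ = 0 := by
      have := congrArg star hw
      simpa [star_sum, mul_comm] using this
    have h3 : ∑ φ, star (w φ) * w φ = 0 := by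
      have : ∑ φ, star (w φ) * w φ
          = (∑ φ, star (w φ) * a φ) - c * ∑ φ, star (w φ) * v φ := by
        rw [Finset.mul_sum, ← Finset.sum_sub_distrib]
        refine Finset.sum_congr rfl fun φ _ => ?_
        simp only [hwdef]
        ring
      rw [this, h1, h2, mul_zero, sub_self]
    have hw0 : ∀ φ, w φ = 0 := by
      have hr : ∑ φ, Complex.normSq (w φ) = 0 := by
        have : ((∑ φ, Complex.normSq (w φ) : ℝ) : ℂ) = 0 := by
          push_cast
          rw [← h3]
          exact Finset.sum_congr rfl fun φ _ => by rw [Complex.star_def, mul_comm, Complex.mul_conj]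
        exact_mod_cast this
      intro φ
      have := (Finset.sum_eq_zero_iff_of_nonneg
        (fun i _ => Complex.normSq_nonneg (w i))).mp hr φ (Finset.mem_univ φ)
      exact Complex.normSq_eq_zero.mp this
    refine ⟨c, fun φ => ?_⟩
    have := hw0 φ
    rw [hwdef] at this
    have := sub_eq_zero.mp this
    simpa [ha] using this
  -- indices 0 and 1
  obtain ⟨c1, hc1⟩ := hspan ⟨0, by omega⟩
  obtain ⟨c2, hc2⟩ := hspan ⟨1, by omega⟩
  have hne01 : (⟨0, by omega⟩ : Fin L) ≠ ⟨1, by omega⟩ := by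
    intro h
    have := congrArg Fin.val h
    simp at this
  have hu0ne : u (⟨0, by omega⟩ : Fin L) ≠ 0 := by
    intro h
    have := horth (⟨0, by omega⟩ : Fin L) ⟨0, by omega⟩
    rw [h] at this
    simp at this
  by_cases hcase : c1 = 0
  · refine ⟨u ⟨0, by omega⟩, hu0ne, ⟨1, 0, by simp⟩, fun φ => ?_⟩
    rw [hc1 φ, hcase, zero_mul]
  · refine ⟨c2 • u ⟨0, by omega⟩ + (-c1) • u ⟨1, by omega⟩, ?_, ⟨c2, -c1, rfl⟩,
      fun φ => ?_⟩
    · intro h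
      have hinner : ∑ p : Fin n × Fin m, star (u (⟨1, by omega⟩ : Fin L) p) *
          ((c2 • u (⟨0, by omega⟩ : Fin L) + (-c1) • u ⟨1, by omega⟩) p) = 0 := by
        rw [h]; simp
      have hexp : ∑ p : Fin n × Fin m, star (u (⟨1, by omega⟩ : Fin L) p) *
          ((c2 • u (⟨0, by omega⟩ : Fin L) + (-c1) • u ⟨1, by omega⟩) p)
          = c2 * (∑ p, star (u (⟨1, by omega⟩ : Fin L) p) * u (⟨0, by omega⟩ : Fin L) p)
            + (-c1) * (∑ p, star (u (⟨1, by omega⟩ : Fin L) p) * u (⟨1, by omega⟩ : Fin L) p) := by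
        rw [Finset.mul_sum, Finset.mul_sum, ← Finset.sum_add_distrib]
        refine Finset.sum_congr rfl fun p _ => ?_
        simp only [Pi.add_apply, Pi.smul_apply, smul_eq_mul]
        ring
      rw [hexp, horth, horth] at hinner
      rw [if_neg (Ne.symm hne01), if_pos rfl] at hinner
      apply hcase
      have h0 : -c1 = 0 := by linear_combination hinner
      exact neg_eq_zero.mp h0
    · simp only [Pi.add_apply, Pi.smul_apply, smul_eq_mul]
      rw [hc1 φ, hc2 φ]
      ring
end
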